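/- Let (Ω, ℱ, P) be a probability space, let N ≥ 2, and let A₁, …, A_N be events. Let C ≥ 1 and γ > 0, and suppose that for every integer n ≥ 1, every k with k + n ≤ N, every event D in σ(A₁, …, A_k), and every event B in σ(A_{k+n}, …, A_N), one has |P(D ∩ B) − P(D)·P(B)| ≤ C·n^{−γ}. Then P(⋃_{k=1}^N A_k) ≥ 1 − exp(−(1/2)·S_N·N^{−2/(γ+2)}) − 2C·N^{−γ/(γ+2)}, where S_N := ∑_{k=1}^N P(A_k). -/

import Mathlib

/-!
Take the lag `n = ⌈N^θ⌉` with `θ = 2/(γ+2)`. Some residue class `t` modulo `n` carries at least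
`S_N / n` of the total mass, and its elements are `n` apart. Peeling off the largest index of `t`
one at a time, the mixing bound at lags `≥ n` gives
`P(⋂_{k∈t} A_kᶜ) ≤ ∏_{k∈t} (1 - P(A_k)) + |t|·C n^{-γ} ≤ exp(-S_N/n) + |t|·C n^{-γ}`,
and `|t| ≤ 2N/n` turns the error into `2C N^{1-θ(γ+1)} = 2C N^{-γ/(γ+2)}`.
-/

open MeasureTheory MeasurableSpace Finset

section

variable {Ω : Type*} [MeasurableSpace Ω]

def AlphaMixingCoeffLE (P : Measure Ω) (A : ℕ → Set Ω) (N m : ℕ) (ε : ℝ) : Prop :=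
  ∀ k, 1 ≤ k → k + m ≤ N →
    ∀ D : Set Ω, MeasurableSet[generateFrom (A '' Set.Icc 1 k)] D →
    ∀ B : Set Ω, MeasurableSet[generateFrom (A '' Set.Icc (k + m) N)] B →
      |P.real (D ∩ B) - P.real D * P.real B| ≤ ε

lemma AlphaMixingCoeffLE.mono {P : Measure Ω} {A : ℕ → Set Ω} {N m : ℕ} {ε ε' : ℝ}
    (h : AlphaMixingCoeffLE P A N m ε) (hε : ε ≤ ε') : AlphaMixingCoeffLE P A N m ε' :=
  fun k hk hkm D hD B hB => (h k hk hkm D hD B hB).trans hε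

lemma alphaMixingCoeffLE_rpow_neg_of_le {P : Measure Ω} {A : ℕ → Set Ω} {N n m : ℕ} {C γ : ℝ}
    (hmix : ∀ m, 1 ≤ m → AlphaMixingCoeffLE P A N m (C * (m : ℝ) ^ (-γ))) (hC : 0 ≤ C)
    (hγ : 0 ≤ γ) (hn : 0 < n) (hm : n ≤ m) : AlphaMixingCoeffLE P A N m (C * (n : ℝ) ^ (-γ)) :=
  (hmix m (hn.trans_le hm)).mono <| mul_le_mul_of_nonneg_left
    (Real.rpow_le_rpow_of_nonpos (by exact_mod_cast hn) (by exact_mod_cast hm) (by linarith)) hC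

def IsSpacedBy (n : ℕ) (t : Finset ℕ) : Prop :=
  ∀ a ∈ t, ∀ b ∈ t, a < b → a + n ≤ b

lemma isSpacedBy_filter_mod_eq (u : Finset ℕ) (n r : ℕ) :
    IsSpacedBy n (u.filter (· % n = r)) := by
  intro a ha b hb hab
  by_contra! hlt
  have hmod : b ≡ a [MOD n] := (mem_filter.1 hb).2.trans (mem_filter.1 ha).2.symm
  exact absurd (hmod.le_of_lt_add (by omega)) (by omega)

lemma IsSpacedBy.injOn_div {n : ℕ} {t : Finset ℕ} (ht : IsSpacedBy n t) (hn : 0 < n) :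
    Set.InjOn (· / n) t := by
  have div_lt : ∀ {x y}, x ∈ t → y ∈ t → x < y → x / n < y / n := fun {x y} hx hy hxy =>
    calc x / n < (x + n) / n := by rw [Nat.add_div_right x hn]; omega
      _ ≤ y / n := Nat.div_le_div_right (ht _ hx _ hy hxy)
  intro a ha b hb hab
  by_contra hne
  rcases lt_or_gt_of_ne hne with h | h
  · exact (div_lt ha hb h).ne hab
  · exact (div_lt hb ha h).ne' hab

lemma IsSpacedBy.card_mul_le {n N : ℕ} {t : Finset ℕ} (ht : IsSpacedBy n t) (hn : 0 < n)
    (htN : ∀ k ∈ t, k ≤ N) : #t * n ≤ N + n := by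
  have hcard : #t ≤ N / n + 1 := by
    simpa using card_le_card_of_injOn (· / n) (t := range (N / n + 1))
      (fun k hk => mem_range.2 (Nat.lt_succ_of_le (Nat.div_le_div_right (htN k hk))))
      (ht.injOn_div hn)
  calc #t * n ≤ (N / n + 1) * n := Nat.mul_le_mul_right n hcard
    _ = N / n * n + n := by ring
    _ ≤ N + n := by gcongr; exact Nat.div_mul_le_self N n

lemma exists_isSpacedBy_subset_div_le_sum {n : ℕ} (hn : 0 < n) (u : Finset ℕ) (w : ℕ → ℝ) :
    ∃ t ⊆ u, IsSpacedBy n t ∧ (∑ k ∈ u, w k) / n ≤ ∑ k ∈ t, w k := by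
  obtain ⟨r, -, hr⟩ := exists_le_sum_fiber_of_maps_to_of_nsmul_le_sum (f := (· % n))
    (t := range n) (b := (∑ k ∈ u, w k) / n) (fun k _ => mem_range.2 (Nat.mod_lt k hn))
    (nonempty_range_iff.2 hn.ne') (by rw [card_range, nsmul_eq_mul, mul_div_cancel₀]; positivity)
  exact ⟨_, filter_subset _ _, isSpacedBy_filter_mod_eq u n r, hr⟩

lemma prod_one_sub_le_exp_neg_sum {ι : Type*} (s : Finset ι) (p : ι → ℝ)
    (hp : ∀ i ∈ s, p i ≤ 1) : ∏ i ∈ s, (1 - p i) ≤ Real.exp (-∑ i ∈ s, p i) := by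
  rw [← sum_neg_distrib, Real.exp_sum]
  exact prod_le_prod (fun i hi => sub_nonneg.2 (hp i hi)) fun i _ => Real.one_sub_le_exp_neg _

lemma measureReal_biInter_le_prod_add {ι : Type*} [LinearOrder ι] (P : Measure Ω)
    [IsZeroOrProbabilityMeasure P] (E : ι → Set Ω) (t : Finset ι) {ε : ℝ} (hε : 0 ≤ ε)
    (h : ∀ s ⊆ t, ∀ b ∈ t, (∀ x ∈ s, x < b) →
      P.real ((⋂ k ∈ s, E k) ∩ E b) ≤ P.real (⋂ k ∈ s, E k) * P.real (E b) + ε) :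
    P.real (⋂ k ∈ t, E k) ≤ ∏ k ∈ t, P.real (E k) + #t * ε := by
  induction t using induction_on_max with
  | empty => simp
  | insert b s hlt ih =>
    have hb : b ∉ s := fun hb => lt_irrefl b (hlt b hb)
    have ih := ih fun s' hs' b' hb' =>
      h s' (hs'.trans (subset_insert _ _)) b' (mem_insert_of_mem hb')
    have hstep := h s (subset_insert _ _) b (mem_insert_self _ _) hlt
    have hEb : P.real (E b) ≤ 1 := measureReal_le_one
    rw [set_biInter_insert, Set.inter_comm, prod_insert hb, card_insert_of_notMem hb]
    calc _ ≤ P.real (⋂ k ∈ s, E k) * P.real (E b) + ε := hstep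
      _ ≤ (∏ k ∈ s, P.real (E k) + #s * ε) * P.real (E b) + ε := by gcongr
      _ ≤ P.real (E b) * ∏ k ∈ s, P.real (E k) + ((#s + 1 : ℕ) : ℝ) * ε := by
        have : (#s : ℝ) * ε * P.real (E b) ≤ #s * ε := mul_le_of_le_one_right (by positivity) hEb
        push_cast
        linarith

lemma measureReal_biInter_compl_le_prod_add (P : Measure Ω) [IsProbabilityMeasure P]
    {A : ℕ → Set Ω} {N n : ℕ} (hA : ∀ k ∈ Icc 1 N, MeasurableSet (A k)) {ε : ℝ} (hε : 0 ≤ ε)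
    (hmix : ∀ m, n ≤ m → AlphaMixingCoeffLE P A N m ε) {t : Finset ℕ} (htN : t ⊆ Icc 1 N)
    (ht : IsSpacedBy n t) :
    P.real (⋂ k ∈ t, (A k)ᶜ) ≤ ∏ k ∈ t, (1 - P.real (A k)) + #t * ε := by
  rw [prod_congr rfl fun k hk => (probReal_compl_eq_one_sub (hA k (htN hk))).symm]
  refine measureReal_biInter_le_prod_add P _ t hε fun s hs b hb hlt => ?_
  rcases s.eq_empty_or_nonempty with rfl | hne
  · simp [hε]
  set a := s.max' hne
  have ha := hs (s.max'_mem hne)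
  have hab := ht a ha b hb (hlt a (s.max'_mem hne))
  have hD : MeasurableSet[generateFrom (A '' Set.Icc 1 a)] (⋂ k ∈ s, (A k)ᶜ) :=
    Finset.measurableSet_biInter _ fun k hk => (measurableSet_generateFrom
      (Set.mem_image_of_mem A
        (show k ∈ Set.Icc 1 a from ⟨(mem_Icc.1 (htN (hs hk))).1, s.le_max' k hk⟩))).compl
  have hB : MeasurableSet[generateFrom (A '' Set.Icc (a + (b - a)) N)] (A b)ᶜ :=
    (measurableSet_generateFrom
      (Set.mem_image_of_mem A
        (show b ∈ Set.Icc (a + (b - a)) N from ⟨by omega, (mem_Icc.1 (htN hb)).2⟩))).compl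
  have hcov := hmix (b - a) (by omega) a (mem_Icc.1 (htN ha)).1
    (by have := (mem_Icc.1 (htN hb)).2; omega) _ hD _ hB
  linarith [(abs_le.1 hcov).2]

lemma one_sub_exp_sub_le_measureReal_biUnion (P : Measure Ω) [IsProbabilityMeasure P]
    {A : ℕ → Set Ω} {N n : ℕ} (hA : ∀ k ∈ Icc 1 N, MeasurableSet (A k)) {ε : ℝ} (hε : 0 ≤ ε)
    (hmix : ∀ m, n ≤ m → AlphaMixingCoeffLE P A N m ε) {t : Finset ℕ} (htN : t ⊆ Icc 1 N)
    (ht : IsSpacedBy n t) :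
    1 - Real.exp (-∑ k ∈ t, P.real (A k)) - #t * ε ≤ P.real (⋃ k ∈ t, A k) := by
  have hunion : P.real (⋃ k ∈ t, A k) = 1 - P.real (⋂ k ∈ t, (A k)ᶜ) := by
    rw [← Set.compl_iUnion₂, probReal_compl_eq_one_sub
      (Finset.measurableSet_biUnion _ fun k hk => hA k (htN hk)), sub_sub_cancel]
  have hprod := prod_one_sub_le_exp_neg_sum t (fun k => P.real (A k))
    fun _ _ => measureReal_le_one
  linarith [measureReal_biInter_compl_le_prod_add P hA hε hmix htN ht]

end

lemma half_mul_mul_rpow_neg_le_div_natCeil {S x θ : ℝ} (hS : 0 ≤ S) (hx : 1 ≤ x) (hθ : 0 ≤ θ) :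
    1 / 2 * S * x ^ (-θ) ≤ S / ⌈x ^ θ⌉₊ := by
  have hxθ : 1 ≤ x ^ θ := Real.one_le_rpow hx hθ
  calc 1 / 2 * S * x ^ (-θ) = S / (2 * x ^ θ) := by
        rw [Real.rpow_neg (by linarith)]; field_simp
    _ ≤ S / ⌈x ^ θ⌉₊ :=
      div_le_div_of_nonneg_left hS (Nat.cast_pos.2 (Nat.ceil_pos.2 (by linarith)))
        (Nat.ceil_le_two_mul (by linarith))

lemma natCeil_natCast_rpow_le {N : ℕ} {θ : ℝ} (hN : 1 ≤ N) (hθ : θ ≤ 1) :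
    ⌈(N : ℝ) ^ θ⌉₊ ≤ N :=
  Nat.ceil_le.2 <| by simpa using Real.rpow_le_rpow_of_exponent_le (by exact_mod_cast hN) hθ

lemma mul_mul_rpow_neg_le_of_rpow_le {x y c C γ : ℝ} (hx : 1 ≤ x) (hγ : 0 ≤ γ) (hC : 0 ≤ C)
    (hy : x ^ (2 / (γ + 2)) ≤ y) (hc : c * y ≤ 2 * x) :
    c * (C * y ^ (-γ)) ≤ 2 * C * x ^ (-(γ / (γ + 2))) := by
  have hx0 : 0 < x := by linarith
  have hy0 : 0 < y := (Real.rpow_pos_of_pos hx0 _).trans_le hy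
  have hsplit : y ^ (-γ) = y ^ (-(γ + 1)) * y := by
    rw [← Real.rpow_add_one hy0.ne']
    ring_nf
  have hpow : y ^ (-(γ + 1)) ≤ x ^ (2 / (γ + 2) * -(γ + 1)) := by
    rw [Real.rpow_mul hx0.le]
    exact Real.rpow_le_rpow_of_nonpos (Real.rpow_pos_of_pos hx0 _) hy (by linarith)
  have hexp : x ^ (2 / (γ + 2) * -(γ + 1)) * x = x ^ (-(γ / (γ + 2))) := by
    rw [← Real.rpow_add_one hx0.ne']
    congr 1
    field_simp
    ring
  calc c * (C * y ^ (-γ)) = C * (c * y) * y ^ (-(γ + 1)) := by rw [hsplit]; ring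
    _ ≤ C * (2 * x) * x ^ (2 / (γ + 2) * -(γ + 1)) := by gcongr
    _ = 2 * C * x ^ (-(γ / (γ + 2))) := by rw [← hexp]; ring

/-- Proposition (polynomial α-mixing spacings, special case `θ = 2/(γ+2)`):
`P(⋃ₖ A k) ≥ 1 − exp(−(1/2)·S_N·N^{−2/(γ+2)}) − 2C·N^{−γ/(γ+2)}`. -/
theorem polynomial_alpha_mixing_bound_special
    {Ω : Type*} [MeasurableSpace Ω] (P : Measure Ω) [IsProbabilityMeasure P]
    (N : ℕ) (hN : 2 ≤ N)
    (A : ℕ → Set Ω) (hA : ∀ k ∈ Finset.Icc 1 N, MeasurableSet (A k))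
    (C γ : ℝ) (hC : 1 ≤ C) (hγ : 0 < γ)
    (hmix : ∀ n : ℕ, 1 ≤ n → ∀ k, 1 ≤ k → k + n ≤ N →
      ∀ D : Set Ω,
        MeasurableSet[MeasurableSpace.generateFrom (A '' Set.Icc 1 k)] D →
      ∀ B : Set Ω,
        MeasurableSet[MeasurableSpace.generateFrom (A '' Set.Icc (k + n) N)] B →
          |(P (D ∩ B)).toReal - (P D).toReal * (P B).toReal| ≤ C * (n : ℝ) ^ (-γ)) :
    1 - Real.exp (-(1 / 2) * (∑ k ∈ Finset.Icc 1 N, (P (A k)).toReal) *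
          (N : ℝ) ^ (-(2 / (γ + 2)))) -
        2 * C * (N : ℝ) ^ (-(γ / (γ + 2))) ≤
      (P (⋃ k ∈ Finset.Icc 1 N, A k)).toReal := by
  simp only [← measureReal_def, neg_mul]
  have hN1 : (1 : ℝ) ≤ N := by exact_mod_cast (by omega : 1 ≤ N)
  have hθ1 : 2 / (γ + 2) ≤ 1 := by rw [div_le_one (by linarith)]; linarith
  set n := ⌈(N : ℝ) ^ (2 / (γ + 2))⌉₊
  have hn0 : 0 < n := Nat.ceil_pos.2 (Real.rpow_pos_of_pos (by linarith) _)
  obtain ⟨t, htN, ht, hmass⟩ :=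
    exists_isSpacedBy_subset_div_le_sum hn0 (Icc 1 N) fun k => P.real (A k)
  have hsub := one_sub_exp_sub_le_measureReal_biUnion P hA (by positivity)
    (fun m => alphaMixingCoeffLE_rpow_neg_of_le hmix (by linarith) hγ.le hn0) htN ht
  have hmass_ceil := half_mul_mul_rpow_neg_le_div_natCeil (S := ∑ k ∈ Icc 1 N, P.real (A k))
    (sum_nonneg fun k _ => measureReal_nonneg) hN1 (by positivity : 0 ≤ 2 / (γ + 2))
  have hcard : (#t : ℝ) * n ≤ 2 * N := by
    have hnN : n ≤ N := natCeil_natCast_rpow_le (by omega) hθ1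
    exact_mod_cast (ht.card_mul_le hn0 fun k hk => (mem_Icc.1 (htN hk)).2).trans (by omega)
  have herr := mul_mul_rpow_neg_le_of_rpow_le (C := C) hN1 hγ.le (by linarith) (Nat.le_ceil _) hcard
  have hmono : P.real (⋃ k ∈ t, A k) ≤ P.real (⋃ k ∈ Icc 1 N, A k) :=
    measureReal_mono (Set.biUnion_subset_biUnion_left (by exact_mod_cast htN))
      (measure_ne_top P _)
  have hexp := Real.exp_le_exp.2 (neg_le_neg (hmass_ceil.trans hmass))
  linarith
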